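/- Given p ∈ (1/2,1) and D ∈ (1-p, 1), for every R ∈ (0, H(1-D)] there exists a unique u ∈ [1-D, 1-D/2) with H(u) - H(u+D-1) = R, and the rate-distortion exponent F(R,D) = D_KL(u‖p) is a strictly increasing function of R on (0, H(1-D)]. -/

import Mathlib

/-!
Both monotonicity statements come from the strict concavity of the binary entropy, in the form
that its derivative `logb 2 (1 - x) - logb 2 x` is strictly decreasing on `(0, 1)`.
The derivative of `u ↦ H(u) - H(u + D - 1)` is `H'(u) - H'(u + D - 1) < 0`, since `u + D - 1 < u`;
the boundary values `H(1 - D)` at `u = 1 - D` and `0` at `u = 1 - D/2` (by `H(1 - x) = H(x)`)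
give existence by the intermediate value theorem and uniqueness by injectivity.
Since `D_KL(u‖p) = -H(u) + (affine in u)` has derivative `H'(p) - H'(u) < 0` for `u < p`,
the exponent decreases in `u` and hence increases in `R`.
-/

open Real Set

/-- Binary entropy function (base-2 logarithm). -/
noncomputable def binH (u : ℝ) : ℝ := -(u * Real.logb 2 u) - (1 - u) * Real.logb 2 (1 - u)

/-- Binary Kullback-Leibler divergence (base-2 logarithm). -/
noncomputable def klBin (u p : ℝ) : ℝ :=
  u * Real.logb 2 (u / p) + (1 - u) * Real.logb 2 ((1 - u) / (1 - p))

lemma binH_eq_negMulLog (u : ℝ) : binH u = (negMulLog u + negMulLog (1 - u)) / log 2 := by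
  simp only [binH, logb, negMulLog]
  ring

@[fun_prop]
lemma continuous_binH : Continuous binH := by
  simp only [funext binH_eq_negMulLog]
  fun_prop

lemma binH_zero : binH 0 = 0 := by simp [binH]

lemma binH_one_sub (x : ℝ) : binH (1 - x) = binH x := by
  simp only [binH, sub_sub_cancel]
  ring

lemma hasDerivAt_binH {x : ℝ} (hx₀ : x ≠ 0) (hx₁ : 1 - x ≠ 0) :
    HasDerivAt binH (logb 2 (1 - x) - logb 2 x) x := by
  rw [show binH = fun u => (negMulLog u + negMulLog (1 - u)) / log 2 from
    funext binH_eq_negMulLog]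
  have hsub : HasDerivAt (fun u : ℝ => 1 - u) (-1) x := by
    simpa using (hasDerivAt_id x).const_sub 1
  have h : HasDerivAt (fun u => (negMulLog u + negMulLog (1 - u)) / log 2)
      ((-log x - 1 + (-log (1 - x) - 1) * -1) / log 2) x :=
    ((hasDerivAt_negMulLog hx₀).add ((hasDerivAt_negMulLog hx₁).comp x hsub)).div_const _
  convert h using 1
  simp only [logb]
  ring

lemma strictAntiOn_deriv_binH : StrictAntiOn (fun x => logb 2 (1 - x) - logb 2 x) (Ioo 0 1) := by
  rintro x ⟨hx₀, hx₁⟩ y ⟨-, hy₁⟩ hxy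
  have h₁ : logb 2 (1 - y) < logb 2 (1 - x) := logb_lt_logb one_lt_two (by linarith) (by linarith)
  have h₂ : logb 2 x < logb 2 y := logb_lt_logb one_lt_two hx₀ hxy
  linarith

lemma strictAntiOn_binH_sub_binH_add {D : ℝ} (hD : D < 1) :
    StrictAntiOn (fun u => binH u - binH (u + D - 1)) (Icc (1 - D) 1) := by
  refine strictAntiOn_of_deriv_neg (convex_Icc _ _) (by fun_prop) fun x hx => ?_
  rw [interior_Icc] at hx
  obtain ⟨hx₀, hx₁⟩ := hx
  have hshift : HasDerivAt (fun u : ℝ => u + D - 1) 1 x :=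
    ((hasDerivAt_id x).add_const D).sub_const 1
  have hderiv : HasDerivAt (fun u => binH u - binH (u + D - 1))
      (logb 2 (1 - x) - logb 2 x - (logb 2 (1 - (x + D - 1)) - logb 2 (x + D - 1)) * 1) x :=
    (hasDerivAt_binH (by linarith) (by linarith)).sub
      ((hasDerivAt_binH (by linarith) (by linarith)).comp x hshift)
  rw [hderiv.deriv, mul_one, sub_neg]
  exact strictAntiOn_deriv_binH ⟨by linarith, by linarith⟩ ⟨by linarith, hx₁⟩ (by linarith)

lemma klBin_eq_neg_binH {p : ℝ} (hp₀ : p ≠ 0) (hp₁ : 1 - p ≠ 0) (u : ℝ) :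
    klBin u p = -binH u - u * logb 2 p - (1 - u) * logb 2 (1 - p) := by
  have mul_logb_div : ∀ a b : ℝ, b ≠ 0 → a * logb 2 (a / b) = a * logb 2 a - a * logb 2 b := by
    intro a b hb
    rcases eq_or_ne a 0 with rfl | ha
    · simp
    · rw [logb_div ha hb, mul_sub]
  rw [klBin, binH, mul_logb_div u p hp₀, mul_logb_div (1 - u) (1 - p) hp₁]
  ring

lemma strictAntiOn_klBin {p : ℝ} (hp : p ∈ Ioo 0 1) :
    StrictAntiOn (fun u => klBin u p) (Icc 0 p) := by
  obtain ⟨hp₀, hp₁⟩ := hp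
  simp only [klBin_eq_neg_binH hp₀.ne' (sub_ne_zero.2 hp₁.ne')]
  refine strictAntiOn_of_deriv_neg (convex_Icc _ _) (by fun_prop) fun x hx => ?_
  rw [interior_Icc] at hx
  obtain ⟨hx₀, hxp⟩ := hx
  have hderiv : HasDerivAt (fun u => -binH u - u * logb 2 p - (1 - u) * logb 2 (1 - p))
      (-(logb 2 (1 - x) - logb 2 x) - 1 * logb 2 p - -1 * logb 2 (1 - p)) x :=
    ((hasDerivAt_binH hx₀.ne' (by linarith)).neg.sub ((hasDerivAt_id x).mul_const _)).sub
      (((hasDerivAt_id x).const_sub 1).mul_const _)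
  rw [hderiv.deriv]
  have hslope : logb 2 (1 - p) - logb 2 p < logb 2 (1 - x) - logb 2 x :=
    strictAntiOn_deriv_binH ⟨hx₀, by linarith⟩ ⟨by linarith, hp₁⟩ hxp
  linarith

lemma existsUnique_binH_sub_binH_add_eq {D : ℝ} (hD₀ : 0 ≤ D) (hD₁ : D < 1) :
    ∀ R ∈ Ioc (0 : ℝ) (binH (1 - D)),
      ∃! u, u ∈ Ico (1 - D) (1 - D / 2) ∧ binH u - binH (u + D - 1) = R := by
  rintro R ⟨hR₀, hR₁⟩
  have hanti := strictAntiOn_binH_sub_binH_add hD₁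
  have hIcc : Icc (1 - D) (1 - D / 2) ⊆ Icc (1 - D) 1 := Icc_subset_Icc_right (by linarith)
  have hleft : binH (1 - D) - binH (1 - D + D - 1) = binH (1 - D) := by simp [binH_zero]
  have hright : binH (1 - D / 2) - binH (1 - D / 2 + D - 1) = 0 := by
    rw [show 1 - D / 2 + D - 1 = 1 - (1 - D / 2) by ring, binH_one_sub (1 - D / 2), sub_self]
  obtain ⟨u, hu, huR⟩ := intermediate_value_Icc' (a := 1 - D) (b := 1 - D / 2)
    (f := fun u => binH u - binH (u + D - 1)) (by linarith) (by fun_prop)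
    (show R ∈ Icc _ _ by rw [hleft, hright]; exact ⟨hR₀.le, hR₁⟩)
  have hu_ne : u ≠ 1 - D / 2 := by
    rintro rfl
    exact hR₀.ne (huR.symm.trans hright).symm
  refine ⟨u, ⟨⟨hu.1, lt_of_le_of_ne hu.2 hu_ne⟩, huR⟩, fun v ⟨hv, hvR⟩ => ?_⟩
  exact hanti.injOn (hIcc (Ico_subset_Icc_self hv)) (hIcc hu) (hvR.trans huR.symm)

theorem rde_exponent_strict_mono (p D : ℝ)
    (hp : p ∈ Set.Ioo (1/2 : ℝ) 1) (hD : D ∈ Set.Ioo (1 - p) 1)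
    (hpD : 1 - D / 2 ≤ p) :
    (∀ R ∈ Set.Ioc (0:ℝ) (binH (1 - D)),
      ∃! u, u ∈ Set.Ico (1 - D) (1 - D / 2) ∧ binH u - binH (u + D - 1) = R) ∧
    (∀ R₁ R₂, R₁ ∈ Set.Ioc (0:ℝ) (binH (1 - D)) → R₂ ∈ Set.Ioc (0:ℝ) (binH (1 - D)) →
      R₁ < R₂ →
      ∀ u₁ u₂, u₁ ∈ Set.Ico (1 - D) (1 - D / 2) → u₂ ∈ Set.Ico (1 - D) (1 - D / 2) →
        binH u₁ - binH (u₁ + D - 1) = R₁ → binH u₂ - binH (u₂ + D - 1) = R₂ →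
        klBin u₁ p < klBin u₂ p) := by
  obtain ⟨hp₀, hp₁⟩ := hp
  obtain ⟨hD₀, hD₁⟩ := hD
  refine ⟨existsUnique_binH_sub_binH_add_eq (by linarith) hD₁, ?_⟩
  rintro R₁ R₂ - - hR u₁ u₂ hu₁ hu₂ rfl rfl
  have mem_rate {u : ℝ} (hu : u ∈ Ico (1 - D) (1 - D / 2)) : u ∈ Icc (1 - D) 1 :=
    ⟨hu.1, by linarith [hu.2]⟩
  have mem_kl {u : ℝ} (hu : u ∈ Ico (1 - D) (1 - D / 2)) : u ∈ Icc 0 p :=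
    ⟨by linarith [hu.1], by linarith [hu.2]⟩
  have hu : u₂ < u₁ :=
    ((strictAntiOn_binH_sub_binH_add hD₁).lt_iff_gt (mem_rate hu₁) (mem_rate hu₂)).1 hR
  exact strictAntiOn_klBin ⟨by linarith, hp₁⟩ (mem_kl hu₂) (mem_kl hu₁) hu
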